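/- arXiv:math/0703774 — 5 statements merged into one kernel-verified Lean document; each statement's English description precedes it below -/
import Mathlib

section
/- Let A be a just infinite k-algebra with nonzero Jacobson radical. Then A has only finitely many prime ideals. -/
/-- A `k`-algebra `A` is *just infinite* if it is infinite dimensional over `k`
and every nonzero two-sided ideal has finite codimension over `k`. -/
def JustInfinite (k A : Type*) [Field k] [Ring A] [Algebra k A] : Prop :=
  ¬ FiniteDimensional k A ∧
    ∀ I : TwoSidedIdeal A, I ≠ ⊥ → FiniteDimensional k (A ⧸ I.asIdeal)

/-- A two-sided ideal `P` of a ring is *prime* if it is proper and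
`a A b ⊆ P` implies `a ∈ P` or `b ∈ P`. -/
def TwoSidedIdeal.IsPrimeTSI {A : Type*} [Ring A] (P : TwoSidedIdeal A) : Prop :=
  P ≠ ⊤ ∧ ∀ a b : A, (∀ r : A, a * r * b ∈ P) → a ∈ P ∨ b ∈ P

namespace JIAux

/-! ### Generic lemmas about two-sided ideals -/

section TSI

variable {R : Type*} [Ring R]

lemma tsi_eq_top_of_one_mem (I : TwoSidedIdeal R) (h : (1:R) ∈ I) : I = ⊤ :=
  eq_top_iff.2 fun x _ => by simpa using I.mul_mem_left x 1 h

lemma tsi_asIdeal_bot : ((⊥ : TwoSidedIdeal R).asIdeal) = ⊥ := by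
  ext x; simp [TwoSidedIdeal.mem_asIdeal, TwoSidedIdeal.mem_bot, Ideal.mem_bot]

lemma tsi_le_iff_asIdeal_le {I J : TwoSidedIdeal R} : I ≤ J ↔ I.asIdeal ≤ J.asIdeal := by
  constructor
  · intro h x hx; rw [TwoSidedIdeal.mem_asIdeal] at hx ⊢; exact h hx
  · intro h x hx; have := h (TwoSidedIdeal.mem_asIdeal.2 hx); rwa [TwoSidedIdeal.mem_asIdeal] at this

lemma prime_pair {P I K : TwoSidedIdeal R} (hP : P.IsPrimeTSI) (h : I ⊓ K ≤ P) :
    I ≤ P ∨ K ≤ P := by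
  by_contra hc
  push_neg at hc
  obtain ⟨h1, h2⟩ := hc
  obtain ⟨a, haI, haP⟩ := SetLike.not_le_iff_exists.1 h1
  obtain ⟨b, hbK, hbP⟩ := SetLike.not_le_iff_exists.1 h2
  rcases hP.2 a b (fun r => h ((TwoSidedIdeal.mem_inf _).2
    ⟨I.mul_mem_right _ _ (I.mul_mem_right _ _ haI), K.mul_mem_left _ _ hbK⟩)) with h | h
  · exact haP h
  · exact hbP h

lemma prime_finset_inf {P : TwoSidedIdeal R} (hP : P.IsPrimeTSI) {ι : Type*} (s : Finset ι)
    (f : ι → TwoSidedIdeal R) (h : s.inf f ≤ P) : ∃ i ∈ s, f i ≤ P := by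
  classical
  induction s using Finset.induction_on with
  | empty => simp only [Finset.inf_empty, top_le_iff] at h; exact absurd h hP.1
  | @insert a s ha ih =>
    rw [Finset.inf_insert] at h
    rcases prime_pair hP h with h' | h'
    · exact ⟨a, Finset.mem_insert_self _ _, h'⟩
    · obtain ⟨i, hi, hle⟩ := ih h'
      exact ⟨i, Finset.mem_insert_of_mem hi, hle⟩

end TSI

/-! ### The quotient by a two-sided ideal as a `k`-algebra -/

section Quot

variable {k A : Type*} [Field k] [Ring A] [Algebra k A]

instance ringConQuotModule (c : RingCon A) : Module k c.Quotient :=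
  { (inferInstance : DistribMulAction k c.Quotient) with
    add_smul := fun a b => Quotient.ind' fun x =>
      congrArg (Quotient.mk'' ·) (add_smul a b x) |>.trans rfl
    zero_smul := fun x => Quotient.inductionOn' x fun y =>
      congrArg (Quotient.mk'' ·) (zero_smul k y) }

noncomputable instance ringConQuotAlgebra (c : RingCon A) : Algebra k c.Quotient :=
  Algebra.ofModule smul_mul_assoc mul_smul_comm

/-- quotient map as a `k`-linear map -/
def ringConMkL (c : RingCon A) : A →ₗ[k] c.Quotient where
  toFun := c.mk'
  map_add' _ _ := rfl
  map_smul' _ _ := rfl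

lemma ringConMk'_surjective (c : RingCon A) : Function.Surjective c.mk' :=
  fun b => Quotient.inductionOn' b fun x => ⟨x, rfl⟩

lemma ringCon_mk'_eq_zero_iff (P : TwoSidedIdeal A) (x : A) :
    P.ringCon.mk' x = 0 ↔ x ∈ P := by
  have : (P.ringCon.mk' x = P.ringCon.mk' 0) ↔ P.ringCon x 0 := P.ringCon.eq
  simpa [TwoSidedIdeal.rel_iff] using this

lemma quot_findim (P : TwoSidedIdeal A) (h : FiniteDimensional k (A ⧸ P.asIdeal)) :
    FiniteDimensional k P.ringCon.Quotient := by
  let g : (A ⧸ (P.asIdeal.restrictScalars k)) →ₗ[k] P.ringCon.Quotient :=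
    Submodule.liftQ _ (ringConMkL P.ringCon)
      (fun x hx => by
        simpa [LinearMap.mem_ker, ringConMkL] using (ringCon_mk'_eq_zero_iff P x).2 hx)
  have hg : Function.Surjective g := by
    intro b
    obtain ⟨x, rfl⟩ := ringConMk'_surjective P.ringCon b
    exact ⟨Submodule.Quotient.mk x, rfl⟩
  have : FiniteDimensional k (A ⧸ (P.asIdeal.restrictScalars k)) :=
    Module.Finite.equiv (Submodule.Quotient.restrictScalarsEquiv k P.asIdeal).symm
  exact Module.Finite.of_surjective g hg

end Quot

/-! ### Finite-dimensional prime algebras -/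

section B

variable {k B : Type*} [Field k] [Ring B] [Algebra k B]

lemma nontrivialB (hp : (⊥ : TwoSidedIdeal B).IsPrimeTSI) : Nontrivial B := by
  by_contra h
  rw [not_nontrivial_iff_subsingleton] at h
  exact hp.1 (by ext x; simp [TwoSidedIdeal.mem_bot, TwoSidedIdeal.mem_top,
    Subsingleton.elim x (0 : B)])

lemma artinianB [FiniteDimensional k B] : IsArtinian B B :=
  isArtinian_of_tower k inferInstance

/-- In a finite-dimensional prime algebra, the Jacobson radical is zero. -/
lemma jacBotB [FiniteDimensional k B] (hp : (⊥ : TwoSidedIdeal B).IsPrimeTSI) :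
    Ideal.jacobson (⊥ : Ideal B) = ⊥ := by
  haveI := nontrivialB hp
  haveI : IsArtinian B B := artinianB (k := k)
  obtain ⟨L, hL⟩ : ∃ L : Submodule B B, IsAtom L := by
    haveI : IsAtomic (Submodule B B) :=
      isAtomic_of_orderBot_wellFounded_lt (IsWellFounded.wf)
    haveI : Nontrivial (Submodule B B) := nontrivial_of_ne ⊥ ⊤ (by
      intro h
      obtain ⟨y, hy⟩ := exists_ne (0 : B)
      have : y ∈ (⊥ : Submodule B B) := h.symm ▸ Submodule.mem_top
      exact hy (by simpa using this))
    exact IsAtomic.exists_atom (Submodule B B)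
  obtain ⟨x, hxL, hx0⟩ : ∃ x ∈ L, x ≠ (0 : B) := by
    by_contra h
    push_neg at h
    exact hL.1 ((Submodule.eq_bot_iff L).2 h)
  set f : B →ₗ[B] B := LinearMap.toSpanSingleton B B x with hf
  have hrange : LinearMap.range f = L := by
    rw [← LinearMap.span_singleton_eq_range]
    have hle : Submodule.span B {x} ≤ L := Submodule.span_le.2 (Set.singleton_subset_iff.2 hxL)
    rcases hle.lt_or_eq with h | h
    · exact absurd (Submodule.span_singleton_eq_bot.1 (hL.2 _ h)) hx0
    · exact h
  have hsimple : IsSimpleModule B ↥(LinearMap.range f) := by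
    rw [hrange]
    exact isSimpleModule_iff_isAtom.2 hL
  have hco : IsCoatom (LinearMap.ker f) := by
    have := LinearMap.isCoatom_ker_of_surjective f.surjective_rangeRestrict
    rwa [LinearMap.ker_rangeRestrict] at this
  have hmax : Ideal.IsMaximal (LinearMap.ker f) := Ideal.isMaximal_def.2 hco
  have hJker : Ideal.jacobson (⊥ : Ideal B) ≤ LinearMap.ker f :=
    sInf_le ⟨bot_le, hmax⟩
  have hJ2 : ∀ a ∈ Ideal.jacobson (⊥ : Ideal B), ∀ r : B,
      a * r ∈ Ideal.jacobson (⊥ : Ideal B) := by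
    intro a ha r
    have h1 : a ∈ (⊥ : TwoSidedIdeal B).jacobson := by
      rw [← TwoSidedIdeal.mem_asIdeal, TwoSidedIdeal.asIdeal_jacobson, tsi_asIdeal_bot]
      exact ha
    have h2 := TwoSidedIdeal.mul_mem_right _ a r h1
    rwa [← TwoSidedIdeal.mem_asIdeal, TwoSidedIdeal.asIdeal_jacobson, tsi_asIdeal_bot] at h2
  rw [eq_bot_iff]
  intro a ha
  rw [Ideal.mem_bot]
  rcases hp.2 a x (fun r => by
    have : a * r ∈ LinearMap.ker f := hJker (hJ2 a ha r)
    rw [LinearMap.mem_ker, hf, LinearMap.toSpanSingleton_apply, smul_eq_mul] at this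
    rw [TwoSidedIdeal.mem_bot]
    exact this) with h | h
  · rwa [TwoSidedIdeal.mem_bot] at h
  · exact absurd ((TwoSidedIdeal.mem_bot _).1 h) hx0

open LinearMap in
lemma piSemisimple {R ι : Type*} [Ring R] [Finite ι] (M : ι → Type*)
    [∀ i, AddCommGroup (M i)] [∀ i, Module R (M i)] [∀ i, IsSemisimpleModule R (M i)] :
    IsSemisimpleModule R (∀ i, M i) := by
  classical
  cases nonempty_fintype ι
  refine isSemisimpleModule_of_isSemisimpleModule_submodule'
    (p := fun i => LinearMap.range (LinearMap.single R M i))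
    (fun i => IsSemisimpleModule.congr
      (LinearEquiv.ofInjective (LinearMap.single R M i) (Pi.single_injective (M := M) i)).symm) ?_
  simp_rw [range_eq_map, Submodule.iSup_map_single, Submodule.pi_top]

lemma semisimpleB [FiniteDimensional k B]
    (hjac : Ideal.jacobson (⊥ : Ideal B) = ⊥) : IsSemisimpleRing B := by
  classical
  haveI : IsArtinian B B := artinianB (k := k)
  obtain ⟨N, ⟨s, rfl⟩, hmin⟩ := IsArtinian.set_has_minimal
    (Set.range (fun s : Finset {m : Ideal B // m.IsMaximal} => s.inf Subtype.val))
    ⟨⊤, ∅, by simp⟩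
  have hNle : ∀ m : Ideal B, m.IsMaximal → s.inf Subtype.val ≤ m := by
    intro m hm
    by_contra hc
    have hlt : (insert ⟨m, hm⟩ s).inf Subtype.val < s.inf Subtype.val := by
      rw [Finset.inf_insert]
      exact lt_of_le_of_ne inf_le_right (fun h => hc (h ▸ inf_le_left))
    exact hmin _ ⟨_, rfl⟩ hlt
  have hNbot : s.inf Subtype.val = ⊥ := by
    rw [eq_bot_iff, ← hjac]
    exact le_sInf (fun J hJ => hNle J hJ.2)
  set f : B →ₗ[B] (∀ m : s, B ⧸ (m : {m : Ideal B // m.IsMaximal}).1) :=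
    LinearMap.pi (fun m => Submodule.mkQ _) with hf
  have hker : LinearMap.ker f = ⊥ := by
    rw [hf, LinearMap.ker_pi]
    simp only [Submodule.ker_mkQ]
    rw [← hNbot, Finset.inf_eq_iInf]
    rw [iInf_subtype]
  have hinj : Function.Injective f := LinearMap.ker_eq_bot.1 hker
  haveI : ∀ m : s, IsSimpleModule B (B ⧸ (m : {m : Ideal B // m.IsMaximal}).1) :=
    fun m => isSimpleModule_iff_isCoatom.2 (Ideal.isMaximal_def.1 m.1.2)
  haveI : ∀ m : s, IsSemisimpleModule B (B ⧸ (m : {m : Ideal B // m.IsMaximal}).1) :=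
    fun m => (inferInstance : IsSemisimpleModule B (B ⧸ (m : {m : Ideal B // m.IsMaximal}).1))
  haveI := piSemisimple (R := B) (fun m : s => B ⧸ (m : {m : Ideal B // m.IsMaximal}).1)
  haveI : IsSemisimpleModule B ↥(LinearMap.range f) := inferInstance
  exact IsSemisimpleModule.congr (M := ↥(LinearMap.range f)) (LinearEquiv.ofInjective f hinj)

lemma simpleB (hss : IsSemisimpleRing B) (hp : (⊥ : TwoSidedIdeal B).IsPrimeTSI)
    (I : TwoSidedIdeal B) (hI : I ≠ ⊥) : I = ⊤ := by
  obtain ⟨C, hC⟩ := exists_isCompl (TwoSidedIdeal.asIdeal I : Submodule B B)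
  set proj : B →ₗ[B] ↥C := C.projectionOnto _ hC.symm with hproj
  set f : B →ₗ[B] B := C.subtype ∘ₗ proj with hf
  have hker : ∀ a ∈ I, f a = 0 := fun a ha => by
    have h0 : proj a = 0 := by
      rw [← LinearMap.mem_ker, hproj, Submodule.ker_projectionOnto]
      exact TwoSidedIdeal.mem_asIdeal.2 ha
    simp [hf, h0]
  have hone : ∀ r : B, f r = r * f 1 := fun r => by
    conv_lhs => rw [show r = r • (1:B) by simp]
    rw [map_smul, smul_eq_mul]
  obtain ⟨a₀, ha₀I, ha₀⟩ : ∃ x ∈ I, x ≠ (0:B) := by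
    by_contra h; push_neg at h
    refine hI (TwoSidedIdeal.ext fun x => ?_)
    rw [TwoSidedIdeal.mem_bot]
    exact ⟨fun hx => h x hx, fun hx => hx ▸ I.zero_mem⟩
  have hc0 : f 1 = 0 := by
    rcases hp.2 a₀ (f 1) (fun r => by
      rw [TwoSidedIdeal.mem_bot]
      have h1 := hker (a₀ * r) (I.mul_mem_right _ _ ha₀I)
      rw [hone (a₀ * r)] at h1
      exact h1) with h | h
    · exact absurd ((TwoSidedIdeal.mem_bot _).1 h) ha₀
    · exact (TwoSidedIdeal.mem_bot _).1 h
  have hCbot : C = ⊥ := by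
    rw [Submodule.eq_bot_iff]
    intro c hc
    have h1 : f c = c := by
      have : proj c = ⟨c, hc⟩ := by
        rw [hproj]
        exact Submodule.projectionOnto_apply_left hC.symm ⟨c, hc⟩
      simp [hf, this]
    have h2 : f c = 0 := by rw [hone, hc0, mul_zero]
    rw [← h1, h2]
  have htop : TwoSidedIdeal.asIdeal I = ⊤ := by
    have h2 := codisjoint_iff.1 hC.codisjoint
    rwa [hCbot, sup_bot_eq] at h2
  exact tsi_eq_top_of_one_mem I (TwoSidedIdeal.mem_asIdeal.1 (htop ▸ Submodule.mem_top))

end B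

/-! ### Transfer to the original algebra -/

section Transfer

variable {k A : Type*} [Field k] [Ring A] [Algebra k A]

lemma botPrime (P : TwoSidedIdeal A) (hP : P.IsPrimeTSI) :
    (⊥ : TwoSidedIdeal P.ringCon.Quotient).IsPrimeTSI := by
  constructor
  · intro h
    have h1 : (1 : P.ringCon.Quotient) ∈ (⊥ : TwoSidedIdeal P.ringCon.Quotient) :=
      h ▸ TwoSidedIdeal.mem_top _
    rw [TwoSidedIdeal.mem_bot] at h1
    have h2 : (1:A) ∈ P := by
      rw [← ringCon_mk'_eq_zero_iff P 1]
      simpa using h1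
    exact hP.1 (tsi_eq_top_of_one_mem P h2)
  · intro a b hab
    obtain ⟨x, rfl⟩ := ringConMk'_surjective P.ringCon a
    obtain ⟨y, rfl⟩ := ringConMk'_surjective P.ringCon b
    rcases hP.2 x y (fun r => by
      have h1 := hab (P.ringCon.mk' r)
      rw [TwoSidedIdeal.mem_bot] at h1
      rw [← ringCon_mk'_eq_zero_iff P]
      simpa [map_mul] using h1) with h | h
    · left; rw [TwoSidedIdeal.mem_bot]; exact (ringCon_mk'_eq_zero_iff P x).2 h
    · right; rw [TwoSidedIdeal.mem_bot]; exact (ringCon_mk'_eq_zero_iff P y).2 h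

lemma jac_le_prime (P : TwoSidedIdeal A) (hP : P.IsPrimeTSI)
    (hfd : FiniteDimensional k (A ⧸ P.asIdeal)) :
    Ideal.jacobson (⊥ : Ideal A) ≤ P.asIdeal := by
  haveI := quot_findim (k := k) P hfd
  have hprime := botPrime P hP
  have hjB : Ideal.jacobson (⊥ : Ideal P.ringCon.Quotient) = ⊥ := jacBotB (k := k) hprime
  have hsurj : Function.Surjective (P.ringCon.mk' : A →+* P.ringCon.Quotient) :=
    ringConMk'_surjective P.ringCon
  have hcomap := Ideal.comap_jacobson_of_surjective (f := (P.ringCon.mk' : A →+* _)) hsurj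
    (K := (⊥ : Ideal P.ringCon.Quotient))
  rw [hjB] at hcomap
  have hker : Ideal.comap (P.ringCon.mk' : A →+* _) (⊥ : Ideal P.ringCon.Quotient)
      = P.asIdeal := by
    ext x
    rw [Ideal.mem_comap, Ideal.mem_bot, TwoSidedIdeal.mem_asIdeal]
    exact ringCon_mk'_eq_zero_iff P x
  rw [hker] at hcomap
  calc Ideal.jacobson (⊥ : Ideal A) ≤ Ideal.jacobson P.asIdeal := Ideal.jacobson_mono bot_le
  _ = P.asIdeal := hcomap.symm

lemma prime_maximal (P : TwoSidedIdeal A) (hP : P.IsPrimeTSI)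
    (hfd : FiniteDimensional k (A ⧸ P.asIdeal)) (M : TwoSidedIdeal A) (hM : P < M) :
    M = ⊤ := by
  haveI := quot_findim (k := k) P hfd
  have hprime := botPrime P hP
  haveI := nontrivialB hprime
  have hss := semisimpleB (k := k) (jacBotB (k := k) hprime)
  have hsurj : Function.Surjective (P.ringCon.mk' : A → P.ringCon.Quotient) :=
    ringConMk'_surjective P.ringCon
  set π : A →+* P.ringCon.Quotient := P.ringCon.mk' with hπdef
  set Mb : TwoSidedIdeal P.ringCon.Quotient := TwoSidedIdeal.mk' (π '' M)
    ⟨0, M.zero_mem, map_zero π⟩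
    (fun {x y} hx hy => by
      obtain ⟨a, ha, rfl⟩ := hx; obtain ⟨b, hb, rfl⟩ := hy
      exact ⟨a + b, M.add_mem ha hb, map_add π a b⟩)
    (fun {x} hx => by
      obtain ⟨a, ha, rfl⟩ := hx; exact ⟨-a, M.neg_mem ha, map_neg π a⟩)
    (fun {x y} hy => by
      obtain ⟨b, hb, rfl⟩ := hy; obtain ⟨r, rfl⟩ := hsurj x
      exact ⟨r * b, M.mul_mem_left r b hb, map_mul π r b⟩)
    (fun {x y} hx => by
      obtain ⟨a, ha, rfl⟩ := hx; obtain ⟨r, rfl⟩ := hsurj y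
      exact ⟨a * r, M.mul_mem_right a r ha, map_mul π a r⟩) with hMb
  have hMbne : Mb ≠ ⊥ := by
    obtain ⟨m, hmM, hmP⟩ := SetLike.exists_of_lt hM
    intro h
    have hmem : π m ∈ Mb := by
      rw [hMb]
      exact (TwoSidedIdeal.mem_mk' _ _ _ _ _ _ _).2 ⟨m, hmM, rfl⟩
    rw [h, TwoSidedIdeal.mem_bot] at hmem
    exact hmP ((ringCon_mk'_eq_zero_iff P m).1 hmem)
  have hMbtop := simpleB hss hprime Mb hMbne
  have h1 : (1 : P.ringCon.Quotient) ∈ Mb := hMbtop ▸ TwoSidedIdeal.mem_top _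
  rw [hMb] at h1
  replace h1 := (TwoSidedIdeal.mem_mk' _ _ _ _ _ _ _).1 h1
  obtain ⟨m₁, hm₁, hπ1⟩ := h1
  have hsub : m₁ - 1 ∈ P := by
    rw [← ringCon_mk'_eq_zero_iff P, map_sub, map_one]
    rw [hπdef] at hπ1
    rw [hπ1, sub_self]
  have h1M : (1:A) ∈ M := by
    have := M.sub_mem hm₁ (hM.le hsub)
    simpa using this
  exact tsi_eq_top_of_one_mem M h1M

end Transfer

end JIAux

open JIAux in
set_option maxHeartbeats 1000000 in
/-- A just infinite algebra with nonzero Jacobson radical has only finitely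
many prime ideals. -/
theorem justInfinite_jacobson_ne_bot_finite_primes (k A : Type*) [Field k]
    [Ring A] [Algebra k A] (hJI : JustInfinite k A)
    (hJ : Ideal.jacobson (⊥ : Ideal A) ≠ ⊥) :
    {P : TwoSidedIdeal A | P.IsPrimeTSI}.Finite := by
  classical
  obtain ⟨-, hquot⟩ := hJI
  set JT : TwoSidedIdeal A := (⊥ : TwoSidedIdeal A).jacobson with hJT
  have hJTas : JT.asIdeal = Ideal.jacobson (⊥ : Ideal A) := by
    rw [hJT, TwoSidedIdeal.asIdeal_jacobson, tsi_asIdeal_bot]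
  have hJTne : JT ≠ ⊥ := by
    intro h
    exact hJ (by rw [← hJTas, h, tsi_asIdeal_bot])
  have hfd : FiniteDimensional k (A ⧸ JT.asIdeal) := hquot JT hJTne
  have fact1 : ∀ P : TwoSidedIdeal A, P.IsPrimeTSI → P ≠ ⊥ → JT ≤ P := by
    intro P hP hPb
    rw [tsi_le_iff_asIdeal_le, hJTas]
    exact jac_le_prime (k := k) P hP (hquot P hPb)
  have fact2 : ∀ P Q : TwoSidedIdeal A, P.IsPrimeTSI → P ≠ ⊥ → Q.IsPrimeTSI → P ≤ Q → P = Q := by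
    intro P Q hP hPb hQ hle
    rcases hle.lt_or_eq with h | h
    · exact absurd (prime_maximal (k := k) P hP (hquot P hPb) Q h) hQ.1
    · exact h
  set T : Set (TwoSidedIdeal A) := {P | P.IsPrimeTSI ∧ P ≠ ⊥} with hT
  have hTfin : T.Finite := by
    haveI : IsArtinian k (A ⧸ JT.asIdeal) := inferInstance
    let q : A →ₗ[k] (A ⧸ JT.asIdeal) := (JT.asIdeal.mkQ).restrictScalars k
    let G : TwoSidedIdeal A → Submodule k (A ⧸ JT.asIdeal) :=
      fun I => (I.asIdeal.restrictScalars k).map q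
    have hGstrict : ∀ I I' : TwoSidedIdeal A, JT ≤ I → I < I' → G I < G I' := by
      intro I I' hJTI hII'
      obtain ⟨x, hxI', hxI⟩ := SetLike.exists_of_lt hII'
      refine lt_of_le_of_ne
        (Submodule.map_mono (fun y hy => by
          simp only [Submodule.restrictScalars_mem, TwoSidedIdeal.mem_asIdeal] at hy ⊢
          exact hII'.le hy)) (fun h => hxI ?_)
      have hx : q x ∈ G I' := Submodule.mem_map_of_mem (by
        simp only [Submodule.restrictScalars_mem, TwoSidedIdeal.mem_asIdeal]; exact hxI')
      rw [← h] at hx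
      obtain ⟨y, hyI, hyq⟩ := hx
      have hyx : y - x ∈ JT.asIdeal := by
        rw [← Submodule.Quotient.eq]
        exact hyq
      have hyI' : y ∈ I := by
        simpa only [SetLike.mem_coe, Submodule.restrictScalars_mem, TwoSidedIdeal.mem_asIdeal] using hyI
      have hsub : y - x ∈ I := hJTI (TwoSidedIdeal.mem_asIdeal.1 hyx)
      have := I.sub_mem hyI' hsub
      simpa using this
    obtain ⟨Nimg, ⟨s, rfl⟩, hmin⟩ := (inferInstance :
      (WellFoundedLT (Submodule k (A ⧸ JT.asIdeal)))).wf.has_min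
      (Set.range fun s : Finset T => G (s.inf (fun P => (P : TwoSidedIdeal A))))
      ⟨_, ⟨∅, rfl⟩⟩
    have hFJ : ∀ s : Finset T, JT ≤ s.inf (fun P => (P : TwoSidedIdeal A)) :=
      fun s => Finset.le_inf fun P _ => fact1 P.1 P.2.1 P.2.2
    have hs : ∀ P ∈ T, s.inf (fun P => (P : TwoSidedIdeal A)) ≤ P := by
      intro P hP
      by_contra hc
      have hlt : (insert ⟨P, hP⟩ s).inf (fun P => (P : TwoSidedIdeal A))
          < s.inf (fun P => (P : TwoSidedIdeal A)) := by
        rw [Finset.inf_insert]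
        exact lt_of_le_of_ne inf_le_right (fun h => hc (h ▸ inf_le_left))
      exact hmin _ ⟨insert ⟨P, hP⟩ s, rfl⟩ (hGstrict _ _ (hFJ _) hlt)
    have hsub : T ⊆ ↑(s.image (Subtype.val : T → TwoSidedIdeal A)) := by
      intro P hP
      obtain ⟨Q, hQs, hQP⟩ := prime_finset_inf hP.1 s _ (hs P hP)
      have hQeq : (Q : TwoSidedIdeal A) = P := fact2 Q.1 P Q.2.1 Q.2.2 hP.1 hQP
      simp only [Finset.coe_image, Set.mem_image, Finset.mem_coe]
      exact ⟨Q, hQs, hQeq⟩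
    exact Set.Finite.subset (s.image _).finite_toSet hsub
  refine (hTfin.insert ⊥).subset ?_
  intro P hP
  by_cases h : P = ⊥
  · exact h ▸ Set.mem_insert _ _
  · exact Set.mem_insert_of_mem _ ⟨hP, h⟩
end

section
/- A commutative just infinite k-algebra is a noetherian integral domain of Krull dimension at most 1. -/
/-- A commutative `k`-algebra `A` is *just infinite* if it is infinite
dimensional over `k` and every nonzero ideal has finite `k`-codimension. -/
def CommJustInfinite (k A : Type*) [Field k] [CommRing A] [Algebra k A] : Prop :=
  ¬ FiniteDimensional k A ∧
    ∀ I : Ideal A, I ≠ ⊥ → FiniteDimensional k (A ⧸ I)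

section aux

variable (k A : Type*) [Field k] [CommRing A] [Algebra k A]

/-- Finite codimension of a nonzero ideal transfers to the submodule quotient. -/
lemma CommJustInfinite.fd_quot (hJI : CommJustInfinite k A) (I : Ideal A) (hI : I ≠ ⊥) :
    FiniteDimensional k (A ⧸ I.restrictScalars k) := by
  have := hJI.2 I hI
  exact Module.Finite.equiv (Submodule.Quotient.restrictScalarsEquiv k I).symm

lemma CommJustInfinite.nontrivial (hJI : CommJustInfinite k A) : Nontrivial A := by
  by_contra h
  rw [not_nontrivial_iff_subsingleton] at h
  exact hJI.1 inferInstance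

lemma CommJustInfinite.isDomain (hJI : CommJustInfinite k A) : IsDomain A := by
  haveI : Nontrivial A := hJI.nontrivial k A
  haveI : NoZeroDivisors A := ?_
  · exact NoZeroDivisors.to_isDomain A
  refine ⟨fun {a b} hab => ?_⟩
  by_contra hcon
  push_neg at hcon
  obtain ⟨ha, hb⟩ := hcon
  -- the multiplication-by-`a` map
  set f : A →ₗ[k] A := LinearMap.mulRight k a with hf
  -- `span {b} ≤ ker f`
  have hker : (Ideal.span {b}).restrictScalars k ≤ LinearMap.ker f := by
    intro x hx
    rw [Submodule.restrictScalars_mem, Ideal.mem_span_singleton] at hx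
    obtain ⟨c, rfl⟩ := hx
    simp [hf, LinearMap.mem_ker, mul_assoc, mul_comm b c, mul_comm b a, hab]
  -- the range of `f` is the span of `a`
  have hrange : LinearMap.range f = (Ideal.span {a}).restrictScalars k := by
    ext x
    simp only [LinearMap.mem_range, Submodule.restrictScalars_mem, Ideal.mem_span_singleton, hf]
    constructor
    · rintro ⟨y, rfl⟩; exact ⟨y, by simp [LinearMap.mulRight_apply, mul_comm]⟩
    · rintro ⟨c, rfl⟩; exact ⟨c, by simp [LinearMap.mulRight_apply, mul_comm]⟩
  -- `A ⧸ ker f` is finite dimensional since it is a quotient of `A ⧸ span {b}`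
  have hb' : Ideal.span ({b} : Set A) ≠ ⊥ := by
    simpa [Ideal.span_eq_bot] using hb
  haveI : FiniteDimensional k (A ⧸ (Ideal.span {b}).restrictScalars k) :=
    hJI.fd_quot k A _ hb'
  have hsur : Function.Surjective
      (Submodule.mapQ ((Ideal.span {b}).restrictScalars k) (LinearMap.ker f) LinearMap.id
        (by simpa using hker)) := by
    intro x
    obtain ⟨y, rfl⟩ := Submodule.Quotient.mk_surjective _ x
    exact ⟨Submodule.Quotient.mk y, rfl⟩
  haveI : FiniteDimensional k (A ⧸ LinearMap.ker f) := Module.Finite.of_surjective _ hsur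
  -- hence the range of `f`, i.e. `span {a}`, is finite dimensional
  haveI : FiniteDimensional k (LinearMap.range f) :=
    Module.Finite.equiv (f.quotKerEquivRange)
  haveI hfd1 : FiniteDimensional k ((Ideal.span {a}).restrictScalars k) := by
    rw [← hrange]; infer_instance
  -- and the quotient by `span {a}` is finite dimensional
  have ha' : Ideal.span ({a} : Set A) ≠ ⊥ := by
    simpa [Ideal.span_eq_bot] using ha
  haveI hfd2 : FiniteDimensional k (A ⧸ (Ideal.span {a}).restrictScalars k) :=
    hJI.fd_quot k A _ ha'
  -- so `A` itself is finite dimensional, contradiction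
  have : IsNoetherian k A := by
    rw [isNoetherian_iff_submodule_quotient ((Ideal.span {a}).restrictScalars k)]
    exact ⟨IsNoetherian.iff_fg.mpr hfd1, IsNoetherian.iff_fg.mpr hfd2⟩
  exact hJI.1 (IsNoetherian.iff_fg.mp this)

lemma CommJustInfinite.isMaximal (hJI : CommJustInfinite k A) (P : Ideal A) [hP : P.IsPrime]
    (hPne : P ≠ ⊥) : P.IsMaximal := by
  haveI : FiniteDimensional k (A ⧸ P) := hJI.2 P hPne
  haveI : Algebra.IsIntegral k (A ⧸ P) := Algebra.IsIntegral.of_finite k (A ⧸ P)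
  have hfield : IsField (A ⧸ P) :=
    (Algebra.IsIntegral.isField_iff_isField
      (algebraMap k (A ⧸ P)).injective).mp (Field.toIsField k)
  exact (Ideal.Quotient.maximal_ideal_iff_isField_quotient P).mpr hfield

lemma CommJustInfinite.isNoetherianRing (hJI : CommJustInfinite k A) : IsNoetherianRing A := by
  rw [isNoetherianRing_iff_ideal_fg]
  intro I
  rcases eq_or_ne I ⊥ with rfl | hI
  · exact ⟨∅, by simp⟩
  obtain ⟨a, haI, ha⟩ := Submodule.exists_mem_ne_zero_of_ne_bot hI
  set J : Ideal A := Ideal.span {a} with hJ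
  have hJne : J ≠ ⊥ := by simpa [hJ, Ideal.span_eq_bot] using ha
  have hJle : J ≤ I := by
    rw [hJ, Ideal.span_le]; simpa using haI
  haveI : FiniteDimensional k (A ⧸ J) := hJI.2 J hJne
  haveI : IsNoetherian k (A ⧸ J) := IsNoetherian.iff_fg.mpr ‹_›
  haveI : IsNoetherian A (A ⧸ J) := isNoetherian_of_tower k ‹_›
  refine Submodule.fg_of_fg_map_of_fg_inf_ker (J.mkQ) ?_ ?_
  · exact IsNoetherian.noetherian _
  · have : I ⊓ LinearMap.ker J.mkQ = J := by
      rw [Submodule.ker_mkQ]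
      exact inf_eq_right.mpr hJle
    rw [this]
    exact ⟨{a}, by simp [hJ]⟩

end aux

/-- A commutative just infinite `k`-algebra is a noetherian integral domain of
Krull dimension at most `1`. -/
theorem commJustInfinite_noetherian_domain_krullDim_le_one (k A : Type*)
    [Field k] [CommRing A] [Algebra k A] (hJI : CommJustInfinite k A) :
    IsNoetherianRing A ∧ IsDomain A ∧ ringKrullDim A ≤ 1 := by
  refine ⟨hJI.isNoetherianRing k A, hJI.isDomain k A, ?_⟩
  rw [ringKrullDim, Order.krullDim]
  refine iSup_le fun p => ?_
  have hlen : p.length ≤ 1 := by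
    by_contra hcon
    push_neg at hcon
    -- get a chain of three primes
    have h01 : p.toFun ⟨0, by omega⟩ < p.toFun ⟨1, by omega⟩ := by
      apply p.strictMono; simp [Fin.lt_def]
    have h12 : p.toFun ⟨1, by omega⟩ < p.toFun ⟨2, by omega⟩ := by
      apply p.strictMono; simp [Fin.lt_def]
    set P := p.toFun ⟨1, by omega⟩
    have hPne : P.asIdeal ≠ ⊥ := by
      intro h
      have hlt : (p.toFun ⟨0, by omega⟩).asIdeal < P.asIdeal := h01
      rw [h] at hlt
      exact (not_lt_bot hlt)
    haveI : P.asIdeal.IsPrime := P.isPrime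
    have hmax : P.asIdeal.IsMaximal := hJI.isMaximal k A P.asIdeal hPne
    have hlt : P.asIdeal < (p.toFun ⟨2, by omega⟩).asIdeal := h12
    have := hmax.eq_of_le (p.toFun ⟨2, by omega⟩).isPrime.ne_top hlt.le
    exact hlt.ne this
  exact_mod_cast hlen
end

section
/- Let k be a field, A a prime k-algebra, and C the extended center of A (the center of the Martindale right ring of quotients). If A has a countable separating set (a countable set of nonzero elements such that every nonzero two-sided ideal contains at least one of them) and A is countable dimensional over k, then C is countable dimensional over k. -/
/-- Let `A` be a prime `k`-algebra of countable `k`-dimension with a countable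
separating set (a countable set of nonzero elements such that every nonzero
two-sided ideal contains one of them).  Then the extended center of `A` is
countable dimensional over `k`.  We formalize this as: any `k`-linearly
independent family of elements of the extended center is countable, where an
element of the extended center is represented by a pair `(I a, f a)` with
`I a` a nonzero two-sided ideal and `f a` a `k`-linear map which is an
`(A,A)`-bimodule map on `I a`, and linear independence means that every
nontrivial finite `k`-linear combination of the `f a` is nonzero at some point
of the common domain. -/
theorem extendedCenter_countable_dimensional (k A : Type*) [Field k] [Ring A]
    [Algebra k A]
    (hprime : ∀ a b : A, (∀ r : A, a * r * b = 0) → a = 0 ∨ b = 0)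
    (hdim : Module.rank k A ≤ Cardinal.aleph0)
    (hsep : ∃ S : Set A, S.Countable ∧ (∀ s ∈ S, s ≠ 0) ∧
      ∀ I : TwoSidedIdeal A, I ≠ ⊥ → ∃ s ∈ S, s ∈ I)
    (ι : Type*) (I : ι → TwoSidedIdeal A) (f : ι → (A →ₗ[k] A))
    (hIne : ∀ a, I a ≠ ⊥)
    (hbimod : ∀ a, ∀ x ∈ I a, ∀ r s : A, f a (r * x * s) = r * f a x * s)
    (hindep : ∀ c : ι →₀ k, c ≠ 0 →
      ∃ x : A, (∀ a ∈ c.support, x ∈ I a) ∧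
        (c.sum fun a ca => ca • f a x) ≠ 0) :
    Countable ι := by
  obtain ⟨S, hScount, hSne, hSsep⟩ := hsep
  have key : ∀ s ∈ S, (({a | s ∈ I a} : Set ι)).Countable := by
    intro s hs
    have hli : LinearIndependent k (fun a : {a : ι // s ∈ I a} => f a.1 s) := by
      rw [linearIndependent_iff]
      intro l hl
      by_contra hl0
      set c : ι →₀ k := l.embDomain (Function.Embedding.subtype _) with hc
      have hcne : c ≠ 0 := by
        simpa [hc, Finsupp.embDomain_eq_zero] using hl0
      obtain ⟨x, hxmem, hxne⟩ := hindep c hcne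
      apply hxne
      -- the coefficients in the support all have `s` in their domain ideal
      have hsI : ∀ a ∈ c.support, s ∈ I a := by
        intro a ha
        rw [hc, Finsupp.support_embDomain, Finset.mem_map] at ha
        obtain ⟨b, -, hb⟩ := ha
        simpa [Function.Embedding.subtype] using hb ▸ b.2
      -- the linear combination vanishes at s
      have hgs : (c.sum fun a ca => ca • f a s) = 0 := by
        rw [hc, Finsupp.sum_embDomain]
        rw [Finsupp.linearCombination_apply] at hl
        exact hl
      -- hence (g x) * r * s = 0 for all r
      have hkey : ∀ r : A, (c.sum fun a ca => ca • f a x) * r * s = 0 := by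
        intro r
        have h1 : (c.sum fun a ca => ca • f a x) * r * s
            = c.sum fun a ca => ca • f a x * r * s := by
          rw [Finsupp.sum_mul, Finsupp.sum_mul]
        rw [h1]
        rw [Finsupp.sum]
        have h2 : ∀ a ∈ c.support,
            (c a) • f a x * r * s = x * r * ((c a) • f a s) := by
          intro a ha
          have e1 : f a (1 * x * (r * s)) = 1 * f a x * (r * s) :=
            hbimod a x (hxmem a ha) 1 (r * s)
          have e2 : f a ((x * r) * s * 1) = (x * r) * f a s * 1 :=
            hbimod a s (hsI a ha) (x * r) 1
          have e3 : f a x * (r * s) = (x * r) * f a s := by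
            have h4 : (1 : A) * x * (r * s) = (x * r) * s * 1 := by
              simp [mul_assoc]
            rw [h4] at e1
            rw [e1] at e2
            simpa using e2
          calc (c a) • f a x * r * s = (c a) • (f a x * (r * s)) := by
                rw [smul_mul_assoc, smul_mul_assoc, mul_assoc]
            _ = (c a) • ((x * r) * f a s) := by rw [e3]
            _ = x * r * ((c a) • f a s) := by rw [mul_smul_comm]
        rw [Finset.sum_congr rfl h2, ← Finset.mul_sum]
        have : ∑ a ∈ c.support, (c a) • f a s = 0 := by
          simpa [Finsupp.sum] using hgs
        rw [this, mul_zero]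
      rcases hprime _ s hkey with h | h
      · exact h
      · exact absurd h (hSne s hs)
    have hcard := hli.cardinal_lift_le_rank
    have hle : Cardinal.mk {a : ι // s ∈ I a} ≤ Cardinal.aleph0 := by
      rw [← Cardinal.lift_le_aleph0]
      exact hcard.trans ((Cardinal.lift_le.mpr hdim).trans_eq Cardinal.lift_aleph0)
    rw [← Set.countable_coe_iff, ← Cardinal.mk_le_aleph0_iff]
    exact hle
  have hcover : (Set.univ : Set ι) ⊆ ⋃ s ∈ S, {a | s ∈ I a} := by
    intro a _
    obtain ⟨s, hsS, hsI⟩ := hSsep (I a) (hIne a)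
    exact Set.mem_biUnion hsS hsI
  have : (Set.univ : Set ι).Countable :=
    Set.Countable.mono hcover (hScount.biUnion key)
  exact Set.countable_univ_iff.mp this
end

section
/- Let k be an uncountable field and A a k-algebra of countable k-dimension that is a field (or more generally: any subfield of A containing k). Then every element of A that generates a field extension of k inside A is algebraic over k; in particular, a field extension of k of countable dimension over an uncountable field k is algebraic over k. -/
/-- A field extension of countable dimension over an uncountable field is
algebraic. -/
theorem algebraic_of_countable_dimension_over_uncountable (k L : Type*)
    [Field k] [Field L] [Algebra k L] [Uncountable k]
    (hdim : Module.rank k L ≤ Cardinal.aleph0) :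
    Algebra.IsAlgebraic k L := by
  constructor
  intro x
  by_contra hx
  have h := (Transcendental.linearIndependent_sub_inv (F := k) (E := L)
    hx).cardinal_lift_le_rank
  have hk : Cardinal.aleph0 < Cardinal.mk k := Cardinal.aleph0_lt_mk
  have h2 : Cardinal.lift.{u_1, u_2} (Module.rank k L) ≤ Cardinal.lift.{u_1, u_2} Cardinal.aleph0 := by
    exact_mod_cast Cardinal.lift_le.2 hdim
  rw [Cardinal.lift_aleph0] at h2
  have h3 := h.trans h2
  rw [Cardinal.lift_le_aleph0] at h3
  exact absurd h3 (not_le.2 hk)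
end

section
/- Let k be an uncountable algebraically closed field and A a countably generated just infinite commutative k-algebra. Then the Krull dimension of A equals 1. -/
private lemma auxFD {k M : Type*} [Field k] [AddCommGroup M] [Module k M]
    (S : Submodule k M) (h1 : FiniteDimensional k S) (h2 : FiniteDimensional k (M ⧸ S)) :
    FiniteDimensional k M := by
  have h1' : Module.rank k S < Cardinal.aleph0 := Module.rank_lt_aleph0_iff.mpr h1
  have h2' : Module.rank k (M ⧸ S) < Cardinal.aleph0 := Module.rank_lt_aleph0_iff.mpr h2
  have h : Module.rank k M < Cardinal.aleph0 := by
    rw [← rank_quotient_add_rank_of_divisionRing S]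
    exact Cardinal.add_lt_aleph0 h2' h1'
  exact Module.rank_lt_aleph0_iff.mp h

private lemma auxCountableClosure {A : Type*} [CommMonoid A] {s : Set A} (hs : s.Countable) :
    (Submonoid.closure s : Set A).Countable := by
  haveI := hs.to_subtype
  have : (Submonoid.closure s : Set A) ⊆
      Set.range (fun l : List s => (l.map Subtype.val).prod) := by
    intro x hx
    obtain ⟨l, hl, rfl⟩ := Submonoid.exists_list_of_mem_closure hx
    refine ⟨l.attach.map fun y => ⟨y.1, hl y.1 y.2⟩, ?_⟩
    simp [List.map_map, Function.comp_def]
  exact (Set.countable_range _).mono this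

/-- Over an uncountable algebraically closed field, a countably generated
commutative just infinite algebra has Krull dimension exactly `1`. -/
theorem krullDim_eq_one_of_commJustInfinite (k A : Type*) [Field k]
    [IsAlgClosed k] [Uncountable k] [CommRing A] [Algebra k A]
    (hcg : ∃ s : Set A, s.Countable ∧ Algebra.adjoin k s = ⊤)
    (hJI : CommJustInfinite k A) :
    ringKrullDim A = 1 := by
  obtain ⟨hinf, hfin⟩ := hJI
  -- A is nontrivial
  haveI hnt : Nontrivial A := by
    by_contra h
    rw [not_nontrivial_iff_subsingleton] at h
    haveI : Finite A := Finite.of_subsingleton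
    exact hinf Module.Finite.of_finite
  -- A is a domain
  haveI hnzd : NoZeroDivisors A := by
    refine ⟨fun {a b} hab => ?_⟩
    by_contra hcon
    push_neg at hcon
    obtain ⟨ha, hb⟩ := hcon
    set I : Ideal A := LinearMap.ker (LinearMap.mul A A a) with hI
    have hIb : b ∈ I := by simpa [hI, LinearMap.mem_ker] using hab
    have hIne : I ≠ ⊥ := fun h => hb (by simpa [h] using hIb)
    have hfinI := hfin I hIne
    set J : Ideal A := Ideal.span {a} with hJ
    have hJne : J ≠ ⊥ := by simpa [hJ, Ideal.span_singleton_eq_bot] using ha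
    have hfinJ := hfin J hJne
    set f : A →ₗ[k] A := LinearMap.mul k A a with hf
    have hker : LinearMap.ker f = I.restrictScalars k := by
      ext x; simp [hf, hI, LinearMap.mem_ker]
    have hrange : LinearMap.range f = J.restrictScalars k := by
      ext x
      simp only [LinearMap.mem_range, Submodule.restrictScalars_mem, hf,
        LinearMap.mul_apply', hJ, Ideal.mem_span_singleton']
      constructor
      · rintro ⟨y, rfl⟩; exact ⟨y, mul_comm y a⟩
      · rintro ⟨y, rfl⟩; exact ⟨y, mul_comm a y⟩
    have e1 : (A ⧸ LinearMap.ker f) ≃ₗ[k] (A ⧸ I) :=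
      (Submodule.quotEquivOfEq _ _ hker).trans
        (Submodule.Quotient.restrictScalarsEquiv k I)
    haveI : FiniteDimensional k (A ⧸ LinearMap.ker f) := e1.symm.finiteDimensional
    haveI : FiniteDimensional k (LinearMap.range f) :=
      (LinearMap.quotKerEquivRange f).finiteDimensional
    haveI hfd1 : FiniteDimensional k (J.restrictScalars k) := by
      rw [← hrange]; infer_instance
    haveI hfd2 : FiniteDimensional k (A ⧸ J.restrictScalars k) :=
      (Submodule.Quotient.restrictScalarsEquiv k J).symm.finiteDimensional
    exact hinf (auxFD (J.restrictScalars k) hfd1 hfd2)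
  haveI : IsDomain A := NoZeroDivisors.to_isDomain A
  -- every nonzero prime is maximal
  have hmax : ∀ P : Ideal A, P.IsPrime → P ≠ ⊥ → P.IsMaximal := by
    intro P hP hPne
    haveI : P.IsPrime := hP
    haveI := hfin P hPne
    letI : Field (A ⧸ P) := fieldOfFiniteDimensional k (A ⧸ P)
    exact Ideal.Quotient.maximal_of_isField _ (Field.toIsField _)
  -- A is not a field
  have hnf : ¬ IsField A := by
    intro hF
    letI : Field A := hF.toField
    obtain ⟨s, hsc, hs⟩ := hcg
    have hrank : Module.rank k A ≤ Cardinal.aleph0 := by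
      have htop : (⊤ : Submodule k A) = Submodule.span k (Submonoid.closure s : Set A) := by
        rw [← Algebra.adjoin_eq_span, hs, Algebra.top_toSubmodule]
      calc Module.rank k A = Module.rank k (⊤ : Submodule k A) := (rank_top k A).symm
        _ = Module.rank k (Submodule.span k (Submonoid.closure s : Set A)) := by rw [htop]
        _ ≤ Cardinal.mk (Submonoid.closure s : Set A) := rank_span_le _
        _ ≤ Cardinal.aleph0 :=
            Cardinal.mk_le_aleph0_iff.mpr (auxCountableClosure hsc).to_subtype
    haveI halg : Algebra.IsAlgebraic k A := by
      refine ⟨fun x => ?_⟩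
      by_contra hx
      have hli := (Transcendental.linearIndependent_sub_inv (F := k) (E := A) hx)
      have hle := hli.cardinal_lift_le_rank
      have h1 : Cardinal.lift.{_} (Cardinal.mk k) ≤ Cardinal.lift.{_} (Module.rank k A) := hle
      have h2 : Cardinal.lift.{_} (Module.rank k A) ≤ Cardinal.aleph0 := by
        calc Cardinal.lift (Module.rank k A) ≤ Cardinal.lift Cardinal.aleph0 :=
              Cardinal.lift_le.mpr hrank
          _ = Cardinal.aleph0 := Cardinal.lift_aleph0
      have h3 : Cardinal.aleph0 < Cardinal.lift (Cardinal.mk k) :=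
        Cardinal.aleph0_lt_lift.mpr (Cardinal.aleph0_lt_mk (α := k))
      exact absurd (h1.trans h2) (not_le.mpr h3)
    have hsurj := (IsAlgClosed.algebraMap_bijective_of_isIntegral (k := k) (K := A)).2
    have : FiniteDimensional k A := by
      have : Function.Surjective (Algebra.linearMap k A) := hsurj
      exact Module.Finite.of_surjective (Algebra.linearMap k A) this
    exact hinf this
  -- lower bound
  obtain ⟨P, hPne, hPprime⟩ := Ring.not_isField_iff_exists_prime.mp hnf
  have hlow : (1 : WithBot (WithTop ℕ)) ≤ ringKrullDim A := by
    let x0 : PrimeSpectrum A := ⟨⊥, Ideal.bot_prime⟩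
    let x1 : PrimeSpectrum A := ⟨P, hPprime⟩
    have hx : x0 < x1 := by
      show x0.asIdeal < x1.asIdeal
      exact bot_lt_iff_ne_bot.mpr hPne
    let q : LTSeries (PrimeSpectrum A) := (RelSeries.singleton _ x0).snoc x1 hx
    have hq := Order.LTSeries.length_le_krullDim q
    have hql : q.length = 1 := rfl
    rw [hql] at hq
    exact_mod_cast hq
  -- upper bound
  have hup : ringKrullDim A ≤ 1 := by
    show Order.krullDim (PrimeSpectrum A) ≤ 1
    rw [Order.krullDim]
    refine iSup_le fun p => ?_
    have hlen : p.length ≤ 1 := by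
      by_contra hl
      push_neg at hl
      have h2 : 2 ≤ p.length := hl
      have h01 : p ⟨0, by omega⟩ < p ⟨1, by omega⟩ := p.strictMono (Fin.mk_lt_mk.mpr (by omega))
      have h12 : p ⟨1, by omega⟩ < p ⟨2, by omega⟩ := p.strictMono (Fin.mk_lt_mk.mpr (by omega))
      set P1 := p ⟨1, by omega⟩
      set P2 := p ⟨2, by omega⟩
      have hP1ne : P1.asIdeal ≠ ⊥ := by
        intro h
        have : (p ⟨0, by omega⟩).asIdeal < P1.asIdeal := h01
        rw [h] at this
        exact (not_lt_bot this)
      have hP1max := hmax P1.asIdeal P1.2 hP1ne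
      have h12' : P1.asIdeal < P2.asIdeal := h12
      exact absurd (hP1max.eq_of_le P2.2.ne_top h12'.le) h12'.ne
    exact_mod_cast hlen
  exact le_antisymm hup hlow
end
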